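/- Let $R$ be a commutative ring and $M$ an $R$-module with an $R$-bilinear bracket $[\cdot,\cdot] : M \times M \to M$. Then $M$ satisfies the left Leibniz identity $[x,[y,z]] - [y,[x,z]] - [[x,y],z] = 0$ (for all $x,y,z \in M$) if and only if the following six identities hold for all $x_1, x_2, x_3 \in M$: (1) $[[x_1,x_3],x_2] + [[x_3,x_1],x_2] = 0$; (2) $[[x_3,x_2],x_1] + [[x_2,x_3],x_1] = 0$; (3) $-[[x_1,x_2],x_3] + [x_1,[x_2,x_3]] - [x_2,[x_1,x_3]] = 0$; (4) $-[x_3,[x_1,x_2]] + [x_1,[x_3,x_2]] + [[x_3,x_1],x_2] = 0$; (5) $-[[x_2,x_1],x_3] - [x_1,[x_2,x_3]] + [x_2,[x_1,x_3]] = 0$; (6) $[x_3,[x_2,x_1]] + [[x_2,x_3],x_1] - [x_2,[x_3,x_1]] = 0$. -/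

import Mathlib

/-!
Relations (3)–(6) are the Leibniz identity itself, up to sign, evaluated at permutations of
`(x₁, x₂, x₃)`; relations (1) and (2) say that `[[x, y], z]` is antisymmetric in `x, y`, which
follows by adding the Leibniz identities at `(x, y, z)` and `(y, x, z)`.
-/

theorem apply_apply_add_apply_swap_eq_zero_of_leibniz {M : Type*} [AddCommGroup M]
    (f : M → M → M) (h : ∀ x y z : M, f x (f y z) - f y (f x z) - f (f x y) z = 0)
    (x y z : M) : f (f x y) z + f (f y x) z = 0 := by
  linear_combination (norm := abel) -h x y z - h y x z

/-- An `R`-bilinear bracket satisfies the left Leibniz identity iff it satisfies the six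
relations defining the white Manin product `Lie ∘ Perm`. -/
theorem stmt6 {R : Type*} [CommRing R] {M : Type*} [AddCommGroup M] [Module R M]
    (b : M →ₗ[R] M →ₗ[R] M) :
    (∀ x y z : M, b x (b y z) - b y (b x z) - b (b x y) z = 0) ↔
      (∀ x₁ x₂ x₃ : M,
        b (b x₁ x₃) x₂ + b (b x₃ x₁) x₂ = 0 ∧
        b (b x₃ x₂) x₁ + b (b x₂ x₃) x₁ = 0 ∧
        -b (b x₁ x₂) x₃ + b x₁ (b x₂ x₃) - b x₂ (b x₁ x₃) = 0 ∧
        -b x₃ (b x₁ x₂) + b x₁ (b x₃ x₂) + b (b x₃ x₁) x₂ = 0 ∧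
        -b (b x₂ x₁) x₃ - b x₁ (b x₂ x₃) + b x₂ (b x₁ x₃) = 0 ∧
        b x₃ (b x₂ x₁) + b (b x₂ x₃) x₁ - b x₂ (b x₃ x₁) = 0) := by
  constructor
  · intro h x₁ x₂ x₃
    have antisymm := apply_apply_add_apply_swap_eq_zero_of_leibniz (fun x y => b x y) h
    exact ⟨antisymm x₁ x₃ x₂, antisymm x₃ x₂ x₁,
      by linear_combination (norm := abel) h x₁ x₂ x₃,
      by linear_combination (norm := abel) -h x₃ x₁ x₂,
      by linear_combination (norm := abel) h x₂ x₁ x₃,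
      by linear_combination (norm := abel) -h x₂ x₃ x₁⟩
  · intro h x y z
    linear_combination (norm := abel) (h x y z).2.2.1
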